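/- arXiv:2112.07573 — 4 statements merged into one kernel-verified Lean document; each statement's English description precedes it below -/
import Mathlib

section
/- Let σ be a simplex embedded in ℝⁿ and let r be the radius of its minimal enclosing ball (the smallest closed ball containing all vertices of σ). Then for any point x in the convex hull of the vertices of σ, there exists a vertex z of σ such that ‖x − z‖ ≤ r. -/
open scoped RealInnerProductSpace


/-- Lemma (minimal enclosing ball): if `σ` is the vertex set of a simplex embedded in `ℝⁿ`,
`c` is the center and `r` the radius of its minimal enclosing ball, then any point `x` of the
convex hull of `σ` admits a vertex `z ∈ σ` with `‖x - z‖ ≤ r`. -/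
theorem miniball_bisector (n : ℕ) (σ : Finset (EuclideanSpace ℝ (Fin n)))
    (hσ : σ.Nonempty) (hindep : AffineIndependent ℝ ((↑) : σ → EuclideanSpace ℝ (Fin n)))
    (c : EuclideanSpace ℝ (Fin n)) (r : ℝ)
    (henc : ∀ v ∈ σ, ‖v - c‖ ≤ r)
    (hmin : ∀ (c' : EuclideanSpace ℝ (Fin n)) (r' : ℝ), (∀ v ∈ σ, ‖v - c'‖ ≤ r') → r ≤ r')
    (x : EuclideanSpace ℝ (Fin n)) (hx : x ∈ convexHull ℝ (σ : Set (EuclideanSpace ℝ (Fin n)))) :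
    ∃ z ∈ σ, ‖x - z‖ ≤ r := by
  have hr : 0 ≤ r := (norm_nonneg _).trans (henc hσ.choose hσ.choose_spec)
  rw [Finset.convexHull_eq] at hx
  obtain ⟨w, hw0, hw1, hwx⟩ := hx
  rw [Finset.centerMass_eq_of_sum_1 _ _ hw1] at hwx
  simp only [id] at hwx
  have hcomb : ∑ z ∈ σ, w z • (z - c) = x - c := by
    simp only [smul_sub, Finset.sum_sub_distrib, ← Finset.sum_smul, hw1, hwx, one_smul]
  have hinner : ∑ z ∈ σ, w z * ⟪x - c, z - c⟫ = ‖x - c‖ ^ 2 := by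
    have : ⟪x - c, ∑ z ∈ σ, w z • (z - c)⟫ = ‖x - c‖ ^ 2 := by
      rw [hcomb, real_inner_self_eq_norm_sq]
    rw [← this, inner_sum]
    exact Finset.sum_congr rfl fun z _ => by rw [real_inner_smul_right]
  have key : ∑ z ∈ σ, w z * ‖x - z‖ ^ 2 ≤ r ^ 2 := by
    have expand : ∑ z ∈ σ, w z * ‖x - z‖ ^ 2
        = ∑ z ∈ σ, w z * (‖x - c‖ ^ 2 - 2 * ⟪x - c, z - c⟫ + ‖z - c‖ ^ 2) := by
      refine Finset.sum_congr rfl fun z _ => ?_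
      rw [show x - z = (x - c) - (z - c) by abel, norm_sub_sq_real]
    have h2 : ∑ z ∈ σ, w z * ‖x - z‖ ^ 2
        = ∑ z ∈ σ, w z * ‖z - c‖ ^ 2 - ‖x - c‖ ^ 2 := by
      rw [expand]
      simp only [mul_add, mul_sub, Finset.sum_add_distrib, Finset.sum_sub_distrib,
        ← Finset.sum_mul, hw1, one_mul]
      rw [show ∀ a b : ℝ, ∑ z ∈ σ, w z * (2 * ⟪x - c, z - c⟫) =
        2 * ∑ z ∈ σ, w z * ⟪x - c, z - c⟫ from fun _ _ => by
          rw [Finset.mul_sum]; exact Finset.sum_congr rfl fun z _ => by ring]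
      rw [hinner]; ring
      · exact 0
      · exact 0
    rw [h2]
    have h3 : ∑ z ∈ σ, w z * ‖z - c‖ ^ 2 ≤ r ^ 2 := by
      calc ∑ z ∈ σ, w z * ‖z - c‖ ^ 2 ≤ ∑ z ∈ σ, w z * r ^ 2 :=
            Finset.sum_le_sum fun z hz => mul_le_mul_of_nonneg_left
              (pow_le_pow_left₀ (norm_nonneg _) (henc z hz) 2) (hw0 z hz)
        _ = r ^ 2 := by rw [← Finset.sum_mul, hw1, one_mul]
    nlinarith [sq_nonneg ‖x - c‖]
  by_contra h
  push_neg at h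
  obtain ⟨z0, hz0, hwz0⟩ := Finset.exists_ne_zero_of_sum_ne_zero (by rw [hw1]; norm_num :
    ∑ z ∈ σ, w z ≠ 0)
  have hwz0' : 0 < w z0 := (hw0 z0 hz0).lt_of_ne (Ne.symm hwz0)
  have : r ^ 2 < ∑ z ∈ σ, w z * ‖x - z‖ ^ 2 := by
    calc r ^ 2 = ∑ z ∈ σ, w z * r ^ 2 := by rw [← Finset.sum_mul, hw1, one_mul]
      _ < ∑ z ∈ σ, w z * ‖x - z‖ ^ 2 := by
          refine Finset.sum_lt_sum (fun z hz => mul_le_mul_of_nonneg_left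
            (pow_le_pow_left₀ hr (h z hz).le 2) (hw0 z hz)) ⟨z0, hz0, ?_⟩
          exact mul_lt_mul_of_pos_left (by nlinarith [h z0 hz0]) hwz0'
  linarith
end

section
/- Consider a d-simplex σ with all vertices on the unit sphere S^d ⊂ ℝ^{d+1}, and suppose its Euclidean diameter δ satisfies δ ≤ √(2(d+1)/d). Then for any point x in the convex hull of the vertices of σ (with x ≠ 0), we have ‖x − x/‖x‖‖ ≤ 1 − √(1 − (1/2)·(d/(d+1))·δ²). -/
/-!
Write `x = ∑ wᵢ • vᵢ` as a convex combination of the unit vertices. The identity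
`‖∑ wᵢ • vᵢ‖² = ∑ wᵢ ‖vᵢ‖² - ½ ∑ᵢ ∑ⱼ wᵢ wⱼ ‖vᵢ - vⱼ‖²` and the diameter bound give
`‖x‖² ≥ 1 - ½ δ² (1 - ∑ wᵢ²)`, and Cauchy–Schwarz gives `∑ wᵢ² ≥ 1/(d+1)`, so
`‖x‖ ≥ √(1 - ½ (d/(d+1)) δ²)` (this replaces Jung's theorem). Radial projection of a point of the
unit ball moves it by exactly `1 - ‖x‖`.
-/

open Finset

theorem norm_sub_inv_norm_smul_self {E : Type*} [NormedAddCommGroup E] [NormedSpace ℝ E] {x : E}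
    (hx : x ≠ 0) : ‖x - ‖x‖⁻¹ • x‖ = |1 - ‖x‖| := by
  have hx' : ‖x‖ ≠ 0 := norm_ne_zero_iff.2 hx
  rw [show x - ‖x‖⁻¹ • x = (1 - ‖x‖⁻¹) • x by rw [sub_smul, one_smul], norm_smul, Real.norm_eq_abs,
    ← abs_norm x, ← abs_mul, abs_norm, sub_mul, one_mul, inv_mul_cancel₀ hx', abs_sub_comm]

section

variable {ι E : Type*} [NormedAddCommGroup E] [InnerProductSpace ℝ E]

theorem norm_sum_smul_sq_eq {s : Finset ι} {w : ι → ℝ} (v : ι → E) (hw : ∑ i ∈ s, w i = 1) :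
    ‖∑ i ∈ s, w i • v i‖ ^ 2 =
      ∑ i ∈ s, w i * ‖v i‖ ^ 2 - (∑ i ∈ s, ∑ j ∈ s, w i * w j * ‖v i - v j‖ ^ 2) / 2 := by
  have hsq : ‖∑ i ∈ s, w i • v i‖ ^ 2 = ∑ i ∈ s, ∑ j ∈ s, w i * w j * inner ℝ (v i) (v j) := by
    rw [← real_inner_self_eq_norm_sq, sum_inner]
    simp only [inner_sum, real_inner_smul_left, real_inner_smul_right]
    exact sum_congr rfl fun i _ => sum_congr rfl fun j _ => by ring
  have hleft : ∑ i ∈ s, ∑ j ∈ s, w i * w j * ‖v i‖ ^ 2 = ∑ i ∈ s, w i * ‖v i‖ ^ 2 := by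
    simp only [mul_right_comm (w _) (w _), ← mul_sum, hw, mul_one]
  have hright : ∑ i ∈ s, ∑ j ∈ s, w i * w j * ‖v j‖ ^ 2 = ∑ j ∈ s, w j * ‖v j‖ ^ 2 := by
    simp only [mul_assoc, ← mul_sum, ← sum_mul, hw, one_mul]
  have hdist : ∑ i ∈ s, ∑ j ∈ s, w i * w j * ‖v i - v j‖ ^ 2 =
      2 * ∑ i ∈ s, w i * ‖v i‖ ^ 2 - 2 * ∑ i ∈ s, ∑ j ∈ s, w i * w j * inner ℝ (v i) (v j) := by
    simp only [norm_sub_sq_real, mul_add, mul_sub, sum_add_distrib, sum_sub_distrib, hleft, hright,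
      mul_left_comm _ (2 : ℝ), ← mul_sum]
    ring
  rw [hsq, hdist]
  ring

theorem inv_card_le_sum_sq {s : Finset ι} {w : ι → ℝ} (hw : ∑ i ∈ s, w i = 1) :
    (#s : ℝ)⁻¹ ≤ ∑ i ∈ s, w i ^ 2 := by
  have hs : s.Nonempty := nonempty_of_sum_ne_zero (hw ▸ one_ne_zero)
  rw [inv_le_iff_one_le_mul₀' (by exact_mod_cast hs.card_pos)]
  simpa [hw] using sq_sum_le_card_mul_sum_sq (s := s) (f := w)

theorem sum_sum_mul_mul_le_mul_one_sub_sum_sq {s : Finset ι} {w : ι → ℝ} {f : ι → ι → ℝ} {D : ℝ}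
    (hw₀ : ∀ i ∈ s, 0 ≤ w i) (hw : ∑ i ∈ s, w i = 1) (hdiag : ∀ i ∈ s, f i i = 0)
    (hf : ∀ i ∈ s, ∀ j ∈ s, f i j ≤ D) :
    ∑ i ∈ s, ∑ j ∈ s, w i * w j * f i j ≤ D * (1 - ∑ i ∈ s, w i ^ 2) := by
  classical
  calc ∑ i ∈ s, ∑ j ∈ s, w i * w j * f i j
      ≤ ∑ i ∈ s, ∑ j ∈ s, (D * (w i * w j) - if i = j then D * w i ^ 2 else 0) := by
        refine sum_le_sum fun i hi => sum_le_sum fun j hj => ?_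
        obtain rfl | hij := eq_or_ne i j
        · simp [hdiag i hi, sq]
        · rw [if_neg hij, sub_zero, mul_comm D]
          exact mul_le_mul_of_nonneg_left (hf i hi j hj) (mul_nonneg (hw₀ i hi) (hw₀ j hj))
    _ = D * (1 - ∑ i ∈ s, w i ^ 2) := by
        simp only [sum_sub_distrib, sum_ite_eq, ← mul_sum, ← sum_mul, hw]
        simp [mul_sub, mul_sum]

theorem one_sub_le_norm_sq_of_mem_convexHull [Fintype ι] {v : ι → E} (hv : ∀ i, ‖v i‖ = 1)
    {δ : ℝ} (hδ : ∀ i j, ‖v i - v j‖ ≤ δ) {x : E} (hx : x ∈ convexHull ℝ (Set.range v)) :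
    1 - δ ^ 2 / 2 * (1 - (Fintype.card ι : ℝ)⁻¹) ≤ ‖x‖ ^ 2 := by
  rw [convexHull_range_eq_exists_affineCombination] at hx
  obtain ⟨s, w, hw₀, hw, rfl⟩ := hx
  have hpair : ∑ i ∈ s, ∑ j ∈ s, w i * w j * ‖v i - v j‖ ^ 2 ≤ δ ^ 2 * (1 - ∑ i ∈ s, w i ^ 2) :=
    sum_sum_mul_mul_le_mul_one_sub_sum_sq hw₀ hw (fun i _ => by simp)
      fun i _ j _ => pow_le_pow_left₀ (norm_nonneg _) (hδ i j) 2
  have hcard : (Fintype.card ι : ℝ)⁻¹ ≤ ∑ i ∈ s, w i ^ 2 :=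
    (inv_anti₀ (by exact_mod_cast (nonempty_of_sum_ne_zero (hw ▸ one_ne_zero)).card_pos)
      (by exact_mod_cast s.card_le_univ)).trans (inv_card_le_sum_sq hw)
  rw [affineCombination_eq_linear_combination s v w hw, norm_sum_smul_sq_eq v hw]
  simp only [hv, one_pow, mul_one, hw]
  nlinarith [sq_nonneg δ]

end

theorem radial_proj_simplex_general (d : ℕ)
    (v : Fin (d + 1) → EuclideanSpace ℝ (Fin (d + 1)))
    (hsphere : ∀ i, ‖v i‖ = 1)
    (δ : ℝ)
    (hdiam : ∀ i j, ‖v i - v j‖ ≤ δ)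
    (x : EuclideanSpace ℝ (Fin (d + 1)))
    (hx : x ∈ convexHull ℝ (Set.range v)) (hx0 : x ≠ 0) :
    ‖x - ‖x‖⁻¹ • x‖ ≤ 1 - Real.sqrt (1 - 1 / 2 * ((d : ℝ) / (d + 1)) * δ ^ 2) := by
  have hball : ‖x‖ ≤ 1 := by
    simpa using (convex_closedBall (0 : EuclideanSpace ℝ (Fin (d + 1))) 1).convexHull_subset_iff.2
      (Set.range_subset_iff.2 fun i => by simp [hsphere i]) hx
  have hsq : 1 - 1 / 2 * ((d : ℝ) / (d + 1)) * δ ^ 2 ≤ ‖x‖ ^ 2 := by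
    convert one_sub_le_norm_sq_of_mem_convexHull hsphere hdiam hx using 2
    simp only [Fintype.card_fin, Nat.cast_add, Nat.cast_one]
    field_simp
    ring
  have hsqrt : Real.sqrt (1 - 1 / 2 * ((d : ℝ) / (d + 1)) * δ ^ 2) ≤ ‖x‖ :=
    Real.sqrt_le_left (norm_nonneg x) |>.mpr hsq
  rw [norm_sub_inv_norm_smul_self hx0, abs_of_nonneg (sub_nonneg.2 hball)]
  linarith

/-- Lemma: for a `d`-simplex `σ` with vertices on the unit sphere `S^d ⊂ ℝ^{d+1}` and Euclidean
diameter `δ ≤ √(2(d+1)/d)`, every point `x ≠ 0` of the convex hull of its vertices satisfies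
`‖x - x/‖x‖‖ ≤ 1 - √(1 - (1/2)(d/(d+1))δ²)`. -/
theorem radial_proj_simplex (d : ℕ) (hd : 1 ≤ d)
    (v : Fin (d + 1) → EuclideanSpace ℝ (Fin (d + 1)))
    (hindep : AffineIndependent ℝ v)
    (hsphere : ∀ i, ‖v i‖ = 1)
    (δ : ℝ)
    (hdiam : ∀ i j, ‖v i - v j‖ ≤ δ)
    (hδ : δ ≤ Real.sqrt (2 * ((d : ℝ) + 1) / d))
    (x : EuclideanSpace ℝ (Fin (d + 1)))
    (hx : x ∈ convexHull ℝ (Set.range v)) (hx0 : x ≠ 0) :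
    ‖x - ‖x‖⁻¹ • x‖ ≤ 1 - Real.sqrt (1 - 1 / 2 * ((d : ℝ) / (d + 1)) * δ ^ 2) :=
  radial_proj_simplex_general d v hsphere δ hdiam x hx hx0
end

section
/- Let x₀, …, x_d be points spanning a simplex in ℝ^N, let k ≤ d, and let b be the barycenter b = (1/(k+1))·(x₀ + ⋯ + x_k) of the first k+1 vertices. Then for every point y in the convex hull of {x₀, …, x_k}, we have ‖b − y‖ ≤ (k/(k+1)) · max_{0 ≤ i < j ≤ k} ‖x_i − x_j‖. -/
/-- Let `x₀, …, x_d` span a simplex in `ℝ^N`, let `k ≤ d`, and let `b` be the barycenter of the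
first `k+1` vertices. Then every point `y` of the convex hull of `{x₀, …, x_k}` satisfies
`‖b − y‖ ≤ (k/(k+1)) · max_{i<j≤k} ‖x_i − x_j‖` (expressed via an arbitrary upper bound `D` on
the pairwise distances). -/
theorem barycenter_dist_le (N d k : ℕ) (hk : k ≤ d)
    (x : Fin (d + 1) → EuclideanSpace ℝ (Fin N))
    (hindep : AffineIndependent ℝ x)
    (D : ℝ)
    (hD : ∀ i j : Fin (k + 1),
      ‖x (Fin.castLE (by omega) i) - x (Fin.castLE (by omega) j)‖ ≤ D)
    (y : EuclideanSpace ℝ (Fin N))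
    (hy : y ∈ convexHull ℝ (Set.range fun i : Fin (k + 1) => x (Fin.castLE (by omega) i))) :
    ‖((k : ℝ) + 1)⁻¹ • (∑ i : Fin (k + 1), x (Fin.castLE (by omega) i)) - y‖ ≤
      (k : ℝ) / (k + 1) * D := by
  have hk1 : k + 1 ≤ d + 1 := by omega
  set f : Fin (k + 1) → EuclideanSpace ℝ (Fin N) := fun i => x (Fin.castLE hk1 i) with hfdef
  have hD' : ∀ i j, ‖f i - f j‖ ≤ D := fun i j => hD i j
  have hD0 : 0 ≤ D := le_trans (by simp) (hD' 0 0)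
  have hy' : y ∈ convexHull ℝ (Set.range f) := hy
  rw [convexHull_range_eq_exists_affineCombination] at hy'
  obtain ⟨s, w, hw0, hw1, hyeq⟩ := hy'
  set W : Fin (k + 1) → ℝ := fun i => if i ∈ s then w i else 0 with hWdef
  have hW0 : ∀ i, 0 ≤ W i := by
    intro i
    by_cases h : i ∈ s <;> simp only [hWdef, h, if_true, if_false, le_refl]
    exact hw0 i h
  have hWsum : ∑ i, W i = 1 := by
    simp only [hWdef, Finset.sum_ite_mem, Finset.univ_inter, hw1]
  have hyeq' : ∑ i, W i • f i = y := by
    rw [← hyeq, Finset.affineCombination_eq_linear_combination s f w hw1]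
    simp only [hWdef, ite_smul, zero_smul, Finset.sum_ite_mem, Finset.univ_inter]
  set b : EuclideanSpace ℝ (Fin N) := ((k : ℝ) + 1)⁻¹ • ∑ i, f i with hbdef
  have hk1ne : ((k : ℝ) + 1) ≠ 0 := by positivity
  have hbound : ∀ j, ‖b - f j‖ ≤ (k : ℝ) / (k + 1) * D := by
    intro j
    have h1 : b - f j = ((k : ℝ) + 1)⁻¹ • ∑ i, (f i - f j) := by
      rw [Finset.sum_sub_distrib, smul_sub, Finset.sum_const, Finset.card_univ,
        Fintype.card_fin, hbdef]
      congr 1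
      rw [← Nat.cast_smul_eq_nsmul ℝ, smul_smul, Nat.cast_add, Nat.cast_one,
        inv_mul_cancel₀ hk1ne, one_smul]
    have h2 : ∑ i, ‖f i - f j‖ ≤ (k : ℝ) * D := by
      have he : ∑ i, ‖f i - f j‖ = ∑ i ∈ Finset.univ.erase j, ‖f i - f j‖ := by
        rw [← Finset.sum_erase_add _ _ (Finset.mem_univ j)]
        simp
      rw [he]
      calc ∑ i ∈ Finset.univ.erase j, ‖f i - f j‖
          ≤ (Finset.univ.erase j).card • D :=
            Finset.sum_le_card_nsmul _ _ D (fun i _ => hD' i j)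
        _ = (k : ℝ) * D := by
            rw [Finset.card_erase_of_mem (Finset.mem_univ j), Finset.card_univ,
              Fintype.card_fin, nsmul_eq_mul]
            simp
    calc ‖b - f j‖ = ((k : ℝ) + 1)⁻¹ * ‖∑ i, (f i - f j)‖ := by
          rw [h1, norm_smul, Real.norm_eq_abs, abs_of_nonneg (by positivity)]
      _ ≤ ((k : ℝ) + 1)⁻¹ * ∑ i, ‖f i - f j‖ := by
          exact mul_le_mul_of_nonneg_left (norm_sum_le _ _) (by positivity)
      _ ≤ ((k : ℝ) + 1)⁻¹ * ((k : ℝ) * D) := by gcongr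
      _ = (k : ℝ) / (k + 1) * D := by field_simp
  have key : b - y = ∑ j, W j • (b - f j) := by
    simp only [smul_sub]
    rw [Finset.sum_sub_distrib, ← Finset.sum_smul, hWsum, one_smul, hyeq']
  show ‖b - y‖ ≤ (k : ℝ) / (k + 1) * D
  calc ‖b - y‖ = ‖∑ j, W j • (b - f j)‖ := by rw [key]
    _ ≤ ∑ j, ‖W j • (b - f j)‖ := norm_sum_le _ _
    _ = ∑ j, W j * ‖b - f j‖ := by
        refine Finset.sum_congr rfl fun j _ => ?_
        rw [norm_smul, Real.norm_eq_abs, abs_of_nonneg (hW0 j)]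
    _ ≤ ∑ j, W j * ((k : ℝ) / (k + 1) * D) :=
        Finset.sum_le_sum fun j _ => mul_le_mul_of_nonneg_left (hbound j) (hW0 j)
    _ = (k : ℝ) / (k + 1) * D := by rw [← Finset.sum_mul, hWsum, one_mul]
end

section
/- Let d ≥ 1 and let δ > 0 satisfy δ⁻¹·ℓ(δ) < 1/(2(d+1)), where ℓ(δ) = 1 − √(1 − (1/2)(d/(d+1))δ²). Then the sequence defined by δ₀ = δ and δ_{n+1} = (d/(d+1))·δ_n + 2ℓ(δ_n) converges to 0; moreover δ_{n+1} ≤ α·δ_n for some α < 1 independent of n. -/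
/-!
Write `ℓ(t) = 1 - √(1 - c t²)`. On its domain `ℓ` is convex with `ℓ(0) = 0`, so the chord bound
`ℓ(t) ≤ (t / δ) ℓ(δ)` holds for `0 ≤ t ≤ δ`. Hence the step map `t ↦ (d/(d+1)) t + 2 ℓ(t)` is bounded
by `α t` on `[0, δ]`, where `α = d/(d+1) + 2 δ⁻¹ ℓ(δ) < 1` by hypothesis. Since `α ≤ 1` the interval
`[0, δ]` is invariant, so `δₙ₊₁ ≤ α δₙ` for every `n` and `δₙ ≤ αⁿ δ → 0`.
-/

open Filter Topology Set

noncomputable def ell (c t : ℝ) : ℝ := 1 - √(1 - c * t ^ 2)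

lemma ell_nonneg {c : ℝ} (hc : 0 ≤ c) (t : ℝ) : 0 ≤ ell c t :=
  sub_nonneg.2 <| Real.sqrt_le_one.2 <| by nlinarith [mul_nonneg hc (sq_nonneg t)]

lemma ell_le_div_mul_ell {c t Δ : ℝ} (hc : 0 ≤ c) (ht : 0 ≤ t) (htΔ : t ≤ Δ) (hΔ : 0 < Δ)
    (hcΔ : c * Δ ^ 2 ≤ 1) : ell c t ≤ t / Δ * ell c Δ := by
  set s := t / Δ
  set r := √(1 - c * Δ ^ 2)
  have hs0 : 0 ≤ s := div_nonneg ht hΔ.le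
  have hs1 : s ≤ 1 := (div_le_one hΔ).2 htΔ
  have hr0 : 0 ≤ r := Real.sqrt_nonneg _
  have hr1 : r ≤ 1 := Real.sqrt_le_one.2 <| by nlinarith [mul_nonneg hc (sq_nonneg Δ)]
  have hct : c * t ^ 2 = s ^ 2 * (1 - r ^ 2) := by
    rw [Real.sq_sqrt (by linarith), show t = s * Δ from (div_mul_cancel₀ t hΔ.ne').symm]
    ring
  -- `1 - c t² - (1 - s (1 - r))² = 2 s (1 - r) (1 - s) ≥ 0`
  have hsq : (1 - s * (1 - r)) ^ 2 ≤ 1 - c * t ^ 2 := by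
    rw [hct]
    nlinarith [mul_nonneg (mul_nonneg hs0 (sub_nonneg.2 hs1)) (sub_nonneg.2 hr1)]
  have := Real.le_sqrt_of_sq_le hsq
  unfold ell
  linarith

lemma add_two_mul_ell_le {a c t δ : ℝ} (hc : 0 ≤ c) (ht : 0 ≤ t) (htδ : t ≤ δ) (hδ : 0 < δ)
    (hcδ : c * δ ^ 2 ≤ 1) : a * t + 2 * ell c t ≤ (a + 2 * (δ⁻¹ * ell c δ)) * t := by
  have := ell_le_div_mul_ell hc ht htδ hδ hcδ
  calc a * t + 2 * ell c t ≤ a * t + 2 * (t / δ * ell c δ) := by linarith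
    _ = (a + 2 * (δ⁻¹ * ell c δ)) * t := by ring

lemma half_div_add_one_mul_sq_le_one {D δ : ℝ} (hD : 0 ≤ D) (hδ : 0 ≤ δ)
    (hδD : δ ≤ √(2 * (D + 1) / D)) : 1 / 2 * (D / (D + 1)) * δ ^ 2 ≤ 1 := by
  rcases hD.eq_or_lt with rfl | hD
  · simp
  have hδ2 : δ ^ 2 * D ≤ 2 * (D + 1) :=
    (le_div_iff₀ hD).1 <| (Real.le_sqrt hδ (by positivity)).1 hδD
  rw [show 1 / 2 * (D / (D + 1)) * δ ^ 2 = δ ^ 2 * D / (2 * (D + 1)) by field_simp,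
    div_le_one (by positivity)]
  exact hδ2

lemma mem_Icc_of_le_mul {f : ℝ → ℝ} {α δ : ℝ} {u : ℕ → ℝ} (hα : α ≤ 1)
    (hf_nonneg : ∀ t ∈ Icc 0 δ, 0 ≤ f t) (hf_le : ∀ t ∈ Icc 0 δ, f t ≤ α * t)
    (hu0 : u 0 ∈ Icc 0 δ) (hu : ∀ n, u (n + 1) = f (u n)) (n : ℕ) : u n ∈ Icc 0 δ := by
  induction n with
  | zero => exact hu0
  | succ n ih =>
    rw [hu n]
    refine ⟨hf_nonneg _ ih, (hf_le _ ih).trans ?_⟩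
    nlinarith [ih.1, ih.2]

lemma tendsto_zero_of_le_mul {α : ℝ} {u : ℕ → ℝ} (hα0 : 0 ≤ α) (hα1 : α < 1)
    (hu_nonneg : ∀ n, 0 ≤ u n) (hu : ∀ n, u (n + 1) ≤ α * u n) : Tendsto u atTop (𝓝 0) := by
  have hgeom : Tendsto (fun n ↦ α ^ n * u 0) atTop (𝓝 0) := by
    simpa using (tendsto_pow_atTop_nhds_zero_of_lt_one hα0 hα1).mul_const (u 0)
  exact squeeze_zero hu_nonneg (fun n ↦ le_geom hα0 n fun k _ ↦ hu k) hgeom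

theorem subdivision_normalization_sequence_tendsto_zero_general (d : ℕ)
    (δ : ℝ) (hδpos : 0 < δ)
    (hdom : δ ≤ Real.sqrt (2 * ((d : ℝ) + 1) / d))
    (hδ : δ⁻¹ * (1 - Real.sqrt (1 - 1 / 2 * ((d : ℝ) / (d + 1)) * δ ^ 2)) <
      1 / (2 * ((d : ℝ) + 1)))
    (seq : ℕ → ℝ) (hseq0 : seq 0 = δ)
    (hrec : ∀ n, seq (n + 1) =
      (d : ℝ) / (d + 1) * seq n +
        2 * (1 - Real.sqrt (1 - 1 / 2 * ((d : ℝ) / (d + 1)) * seq n ^ 2))) :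
    Tendsto seq atTop (𝓝 0) ∧ ∃ α : ℝ, α < 1 ∧ ∀ n, seq (n + 1) ≤ α * seq n := by
  set c : ℝ := 1 / 2 * ((d : ℝ) / (d + 1))
  set α : ℝ := d / (d + 1) + 2 * (δ⁻¹ * ell c δ)
  have hc : 0 ≤ c := by positivity
  have hcδ : c * δ ^ 2 ≤ 1 := half_div_add_one_mul_sq_le_one d.cast_nonneg hδpos.le hdom
  have hα0 : 0 ≤ α := by have := ell_nonneg hc δ; positivity
  have hα1 : α < 1 := by
    have hsum : (d : ℝ) / (d + 1) + 1 / (d + 1) = 1 := by field_simp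
    have : 2 * (δ⁻¹ * ell c δ) < 1 / (d + 1) := by
      rw [show (1 : ℝ) / (d + 1) = 2 * (1 / (2 * (d + 1))) by field_simp]
      exact mul_lt_mul_of_pos_left hδ two_pos
    linarith
  have hf_le : ∀ t ∈ Icc 0 δ, d / (d + 1) * t + 2 * ell c t ≤ α * t :=
    fun t ht ↦ add_two_mul_ell_le hc ht.1 ht.2 hδpos hcδ
  have hmem : ∀ n, seq n ∈ Icc 0 δ :=
    mem_Icc_of_le_mul hα1.le (fun t ht ↦ by have := ell_nonneg hc t; have := ht.1; positivity) hf_le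
      (by rw [hseq0]; exact ⟨hδpos.le, le_rfl⟩) hrec
  have hstep : ∀ n, seq (n + 1) ≤ α * seq n := fun n ↦ (hrec n).trans_le (hf_le _ (hmem n))
  exact ⟨tendsto_zero_of_le_mul hα0 hα1 (fun n ↦ (hmem n).1) hstep, α, hα1, hstep⟩

/-- Let `ℓ(t) = 1 − √(1 − (1/2)(d/(d+1))t²)` and suppose `δ > 0` (with `δ` in the domain of
`ℓ`) satisfies `δ⁻¹ ℓ(δ) < 1/(2(d+1))`. Then the sequence `δ₀ = δ`,
`δ_{n+1} = (d/(d+1)) δ_n + 2 ℓ(δ_n)` converges to `0`; moreover there is an `α < 1`,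
independent of `n`, with `δ_{n+1} ≤ α δ_n` for all `n`. -/
theorem subdivision_normalization_sequence_tendsto_zero (d : ℕ) (hd : 1 ≤ d)
    (δ : ℝ) (hδpos : 0 < δ)
    (hdom : δ ≤ Real.sqrt (2 * ((d : ℝ) + 1) / d))
    (hδ : δ⁻¹ * (1 - Real.sqrt (1 - 1 / 2 * ((d : ℝ) / (d + 1)) * δ ^ 2)) <
      1 / (2 * ((d : ℝ) + 1)))
    (seq : ℕ → ℝ) (hseq0 : seq 0 = δ)
    (hrec : ∀ n, seq (n + 1) =
      (d : ℝ) / (d + 1) * seq n +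
        2 * (1 - Real.sqrt (1 - 1 / 2 * ((d : ℝ) / (d + 1)) * seq n ^ 2))) :
    Tendsto seq atTop (𝓝 0) ∧ ∃ α : ℝ, α < 1 ∧ ∀ n, seq (n + 1) ≤ α * seq n :=
  subdivision_normalization_sequence_tendsto_zero_general d δ hδpos hdom hδ seq hseq0 hrec
end
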